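/- Fix n ≥ 2 and a real τ with 0 < τ ≤ 1/2; set m = √(τ(1−τ)/2^n) and assume 2m < τ. Let φ₀ = √τ · e_{0} + √(1−τ) · (2^{−n/2} Σ_{v ∈ {0,1}^n} e_v) ∈ ℂ^{2^n} (where e_0 is the standard basis vector indexed by the all-zeros string), let K = 1 + 2m, and let φ = K^{−1/2} φ₀ (a unit vector). Then for every real η with 0 < η ≤ τ: Σ_{x : α(x)² ≤ η²} α(x)²/2^n ≤ 2τ(1−τ), where α(x) = tr(P_x φφ†) and the sum is over x ∈ ({0,1}²)^n. -/

import Mathlib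

/-!
Write `A = 2ⁿ`. The state is `φ = c|0…0⟩ + d·Σ_v |v⟩` with `c² = τ/K`, `d²A = (1 − τ)/K` and
`cd = m/K`, so `α(x) = c²·[x has no X part] + 2cd·Re R(x) + d²A·[x has no Z part]`, where
`R(x) = Σ_b ⟨0…0|P_x|b⟩ = (−i)^{#Y factors of x}`. If `x` has no X part or no Z part then
`R(x) = 1` and `α(x) > τ ≥ η`, so such `x` do not contribute; every other `x` has
`α(x) = 2cd·Re R(x)`. Since `|R(x)| = 1` and `Σ_x R(x)² = ∏_i Σ_{P ∈ {I,X,Y,Z}} R(P)² = 2ⁿ`,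
we get `Σ_x (Re R(x))² = (A² + A)/2`, so the sum is at most `2m²(A + 1)/K²`. This is at most
`2τ(1 − τ) = 2m²A` because `2m < τ` forces `mA ≥ 1`.
-/

open scoped Matrix Kronecker
open Matrix

noncomputable def pauli1 (vw : Bool × Bool) : Matrix (Fin 2) (Fin 2) ℂ :=
  (Complex.I ^ (vw.1 && vw.2).toNat) •
    ((!![0, 1; 1, 0] : Matrix (Fin 2) (Fin 2) ℂ) ^ vw.1.toNat *
      (!![1, 0; 0, -1] : Matrix (Fin 2) (Fin 2) ℂ) ^ vw.2.toNat)

/-- The `n`-qubit Pauli string `P_x = ⊗_i i^{v_i w_i} X^{v_i} Z^{w_i}`,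
realized as a matrix indexed by `Fin n → Fin 2` (the Kronecker product of the
single-qubit factors). -/
noncomputable def pauliString {n : ℕ} (x : Fin n → Bool × Bool) :
    Matrix (Fin n → Fin 2) (Fin n → Fin 2) ℂ :=
  Matrix.of fun a b => ∏ i, pauli1 (x i) (a i) (b i)

/-- The outer product `ψψ†`. -/
noncomputable def outer {ι : Type} (ψ : ι → ℂ) : Matrix ι ι ℂ :=
  Matrix.of fun a b => ψ a * (starRingEnd ℂ) (ψ b)

/-- `α_ψ(x) = tr(P_x ψψ†)`, a real number. -/
noncomputable def alpha {n : ℕ} (ψ : (Fin n → Fin 2) → ℂ) (x : Fin n → Bool × Bool) : ℝ :=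
  (Matrix.trace (pauliString x * outer ψ)).re

open Complex

lemma pauli1_zero_zero (vw : Bool × Bool) : pauli1 vw 0 0 = if vw.1 = false then 1 else 0 := by
  rcases vw with ⟨_ | _, _ | _⟩ <;> simp [pauli1]

lemma sum_pauli1_zero (vw : Bool × Bool) :
    ∑ b, pauli1 vw 0 b = if vw = (true, true) then -I else 1 := by
  rcases vw with ⟨_ | _, _ | _⟩ <;> simp [pauli1, Fin.sum_univ_two]

lemma sum_sum_pauli1 (vw : Bool × Bool) :
    ∑ a, ∑ b, pauli1 vw a b = if vw.2 = false then 2 else 0 := by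
  rcases vw with ⟨_ | _, _ | _⟩ <;> simp [pauli1, Fin.sum_univ_two] <;> norm_num

lemma pauli1_isHermitian (vw : Bool × Bool) : (pauli1 vw).IsHermitian := by
  rcases vw with ⟨_ | _, _ | _⟩ <;> ext a b <;> fin_cases a <;> fin_cases b <;>
    simp [pauli1]

lemma pauliString_isHermitian {n : ℕ} (x : Fin n → Bool × Bool) :
    (pauliString x).IsHermitian := by
  ext a b
  simp only [conjTranspose_apply, pauliString, of_apply, star_prod]
  exact Finset.prod_congr rfl fun i _ => congrFun₂ (pauli1_isHermitian (x i)) (a i) (b i)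

section PauliString

variable {n : ℕ} (x : Fin n → Bool × Bool)

lemma pauliString_zero_zero :
    pauliString x 0 0 = if ∀ i, (x i).1 = false then 1 else 0 := by
  simp [pauliString, pauli1_zero_zero, Fintype.prod_boole]

lemma sum_sum_pauliString :
    ∑ a, ∑ b, pauliString x a b = if ∀ i, (x i).2 = false then 2 ^ n else 0 := by
  have h : ∀ a : Fin n → Fin 2, ∑ b, pauliString x a b = ∏ i, ∑ t, pauli1 (x i) (a i) t :=
    fun a => (Fintype.prod_sum fun i t => pauli1 (x i) (a i) t).symm
  simp only [h]
  rw [← Fintype.prod_sum fun i s => ∑ t, pauli1 (x i) s t]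
  simp only [sum_sum_pauli1, Fintype.prod_ite_zero, Finset.prod_const, Finset.card_univ,
    Fintype.card_fin]

noncomputable def pauliRowSum : ℂ := ∑ b, pauliString x 0 b

lemma pauliRowSum_eq_prod : pauliRowSum x = ∏ i, ∑ b, pauli1 (x i) 0 b := by
  simp only [pauliRowSum, pauliString, of_apply, Pi.zero_apply, Fintype.prod_sum]

lemma pauliRowSum_eq_one (h : ∀ i, x i ≠ (true, true)) : pauliRowSum x = 1 := by
  rw [pauliRowSum_eq_prod]
  exact Finset.prod_eq_one fun i _ => by rw [sum_pauli1_zero, if_neg (h i)]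

lemma norm_pauliRowSum : ‖pauliRowSum x‖ = 1 := by
  rw [pauliRowSum_eq_prod, norm_prod]
  exact Finset.prod_eq_one fun i _ => by rw [sum_pauli1_zero]; split_ifs <;> simp

end PauliString

lemma sum_pauliRowSum_sq (n : ℕ) : ∑ x : Fin n → Bool × Bool, pauliRowSum x ^ 2 = 2 ^ n := by
  have h : ∑ vw : Bool × Bool, (∑ b, pauli1 vw 0 b) ^ 2 = 2 := by
    simp only [sum_pauli1_zero, Fintype.sum_prod_type, Fintype.sum_bool]
    norm_num
  simp only [pauliRowSum_eq_prod, ← Finset.prod_pow]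
  rw [← Fintype.prod_sum fun _ vw => (∑ b, pauli1 vw 0 b) ^ 2]
  rw [h, Finset.prod_const, Finset.card_univ, Fintype.card_fin]

lemma re_sq_eq_of_norm_eq_one {z : ℂ} (hz : ‖z‖ = 1) : z.re ^ 2 = (1 + (z ^ 2).re) / 2 := by
  have h := Complex.sq_norm z
  rw [hz, Complex.normSq_apply] at h
  rw [sq z, Complex.mul_re]
  nlinarith

lemma sum_re_pauliRowSum_sq (n : ℕ) :
    ∑ x : Fin n → Bool × Bool, (pauliRowSum x).re ^ 2 = (4 ^ n + 2 ^ n) / 2 := by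
  simp only [re_sq_eq_of_norm_eq_one (norm_pauliRowSum _), ← Finset.sum_div,
    Finset.sum_add_distrib, ← Complex.re_sum, sum_pauliRowSum_sq]
  norm_cast
  simp

section TwoLevel

variable {ι : Type} [Fintype ι] [DecidableEq ι] (i₀ : ι) (c d : ℝ)

lemma trace_mul_outer_single_add_const (M : Matrix ι ι ℂ) :
    trace (M * outer (Pi.single i₀ (c : ℂ) + fun _ => (d : ℂ))) =
      c ^ 2 * M i₀ i₀ + c * d * (∑ b, M i₀ b + ∑ a, M a i₀) + d ^ 2 * ∑ a, ∑ b, M a b := by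
  simp only [trace, diag, mul_apply, outer, of_apply, Pi.add_apply, Pi.single_apply, map_add,
    apply_ite (starRingEnd ℂ), map_zero, conj_ofReal, mul_add, add_mul, ite_mul, mul_ite,
    zero_mul, mul_zero, Finset.sum_add_distrib, Finset.sum_ite_eq', Finset.mem_univ, if_true,
    Finset.sum_ite_irrel, Finset.sum_const_zero]
  simp only [← Finset.sum_mul]
  ring

lemma re_trace_mul_outer_single_add_const {M : Matrix ι ι ℂ} (hM : M.IsHermitian) :
    (trace (M * outer (Pi.single i₀ (c : ℂ) + fun _ => (d : ℂ)))).re =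
      c ^ 2 * (M i₀ i₀).re + 2 * c * d * (∑ b, M i₀ b).re + d ^ 2 * (∑ a, ∑ b, M a b).re := by
  have hcol : ∑ a, M a i₀ = starRingEnd ℂ (∑ b, M i₀ b) := by
    rw [map_sum]
    exact Finset.sum_congr rfl fun a _ => (hM.apply a i₀).symm
  rw [trace_mul_outer_single_add_const, hcol, add_conj]
  simp only [add_re, mul_re, ofReal_re, ofReal_im, ← ofReal_pow, ← ofReal_mul]
  ring

end TwoLevel

lemma sq_mul_add_one_le {A τ m : ℝ} (hA : 0 < A) (hτ : τ ≤ 1 / 2) (hm : 0 ≤ m)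
    (hmA : m ^ 2 * A = τ * (1 - τ)) (hmτ : 2 * m < τ) :
    m ^ 2 * (A + 1) ≤ τ * (1 - τ) * (1 + 2 * m) ^ 2 := by
  have hτ0 : 0 < τ := by linarith
  have hsq : (2 * m) ^ 2 * A < τ ^ 2 * A := by gcongr
  have hτA : 4 * (1 - τ) < τ * A := by nlinarith
  have hmA_sq : 1 ≤ (m * A) ^ 2 := by nlinarith
  have hmA_one : 1 ≤ m * A := by nlinarith [mul_nonneg hm hA.le]
  rw [← hmA]
  nlinarith [mul_nonneg (mul_nonneg hm hm) hA.le, mul_nonneg hm hm]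

section Alpha

variable {n : ℕ} (c d : ℝ)

lemma alpha_single_add_const (x : Fin n → Bool × Bool) :
    alpha (Pi.single 0 (c : ℂ) + fun _ => (d : ℂ)) x =
      c ^ 2 * (if ∀ i, (x i).1 = false then 1 else 0) + 2 * c * d * (pauliRowSum x).re +
        d ^ 2 * (if ∀ i, (x i).2 = false then 2 ^ n else 0) := by
  rw [alpha, re_trace_mul_outer_single_add_const _ _ _ (pauliString_isHermitian x),
    pauliString_zero_zero, sum_sum_pauliString, ← pauliRowSum]
  have h2 : ((2 : ℂ) ^ n).re = 2 ^ n := by norm_cast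
  split_ifs <;> simp [h2]

variable {c d} {η : ℝ}

lemma alpha_single_add_const_eq_of_sq_le (hη : 0 ≤ η) (h₁ : η < c ^ 2 + 2 * c * d)
    (h₂ : η < 2 * c * d + d ^ 2 * 2 ^ n) {x : Fin n → Bool × Bool}
    (hx : alpha (Pi.single 0 (c : ℂ) + fun _ => (d : ℂ)) x ^ 2 ≤ η ^ 2) :
    alpha (Pi.single 0 (c : ℂ) + fun _ => (d : ℂ)) x = 2 * c * d * (pauliRowSum x).re := by
  have hle : alpha (Pi.single 0 (c : ℂ) + fun _ => (d : ℂ)) x ≤ η :=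
    abs_le_of_sq_le_sq' hx hη |>.2
  rw [alpha_single_add_const] at hle ⊢
  have hv : ¬∀ i, (x i).1 = false := by
    intro hv
    rw [if_pos hv, pauliRowSum_eq_one x fun i hi => by simpa [hi] using hv i, one_re] at hle
    have : 0 ≤ d ^ 2 * (if ∀ i, (x i).2 = false then (2 : ℝ) ^ n else 0) := by positivity
    linarith
  have hw : ¬∀ i, (x i).2 = false := by
    intro hw
    rw [if_pos hw, pauliRowSum_eq_one x fun i hi => by simpa [hi] using hw i, one_re] at hle
    have : 0 ≤ c ^ 2 * (if ∀ i, (x i).1 = false then (1 : ℝ) else 0) := by positivity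
    linarith
  simp [hv, hw]

lemma sum_alpha_single_add_const_sq_le (hη : 0 ≤ η) (h₁ : η < c ^ 2 + 2 * c * d)
    (h₂ : η < 2 * c * d + d ^ 2 * 2 ^ n) :
    ∑ x ∈ Finset.univ.filter (fun x : Fin n → Bool × Bool =>
        alpha (Pi.single 0 (c : ℂ) + fun _ => (d : ℂ)) x ^ 2 ≤ η ^ 2),
        alpha (Pi.single 0 (c : ℂ) + fun _ => (d : ℂ)) x ^ 2 / 2 ^ n
      ≤ 2 * (c * d) ^ 2 * (2 ^ n + 1) := calc
  _ = ∑ x ∈ Finset.univ.filter (fun x : Fin n → Bool × Bool =>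
        alpha (Pi.single 0 (c : ℂ) + fun _ => (d : ℂ)) x ^ 2 ≤ η ^ 2),
        (2 * c * d * (pauliRowSum x).re) ^ 2 / 2 ^ n :=
    Finset.sum_congr rfl fun x hx => by
      rw [alpha_single_add_const_eq_of_sq_le hη h₁ h₂ (Finset.mem_filter.mp hx).2]
  _ ≤ ∑ x : Fin n → Bool × Bool, (2 * c * d * (pauliRowSum x).re) ^ 2 / 2 ^ n :=
    Finset.sum_le_sum_of_subset_of_nonneg (Finset.filter_subset _ _) fun _ _ _ => by positivity
  _ = 4 * (c * d) ^ 2 / 2 ^ n * ∑ x : Fin n → Bool × Bool, (pauliRowSum x).re ^ 2 := by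
    rw [Finset.mul_sum]
    exact Finset.sum_congr rfl fun x _ => by ring
  _ = 2 * (c * d) ^ 2 * (2 ^ n + 1) := by
    rw [sum_re_pauliRowSum_sq, show (4 : ℝ) ^ n = 2 ^ n * 2 ^ n by rw [← mul_pow]; norm_num]
    field_simp
    ring

end Alpha

lemma sum_alpha_single_add_const_sq_le_of_coeffs {n : ℕ} {τ m c d η : ℝ} (hτ0 : 0 < τ)
    (hτ : τ ≤ 1 / 2) (hm : m = Real.sqrt (τ * (1 - τ) / 2 ^ n)) (hmτ : 2 * m < τ)
    (hc : c ^ 2 = τ / (1 + 2 * m)) (hd : d ^ 2 * 2 ^ n = (1 - τ) / (1 + 2 * m))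
    (hcd : c * d = m / (1 + 2 * m)) (hη0 : 0 < η) (hητ : η ≤ τ) :
    ∑ x ∈ Finset.univ.filter (fun x : Fin n → Bool × Bool =>
        alpha (Pi.single 0 (c : ℂ) + fun _ => (d : ℂ)) x ^ 2 ≤ η ^ 2),
        alpha (Pi.single 0 (c : ℂ) + fun _ => (d : ℂ)) x ^ 2 / 2 ^ n
      ≤ 2 * τ * (1 - τ) := by
  have h1τ : 0 < 1 - τ := by linarith
  have hm0 : 0 < m := hm ▸ Real.sqrt_pos.mpr (by positivity)
  have hmA : m ^ 2 * 2 ^ n = τ * (1 - τ) := by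
    rw [hm, Real.sq_sqrt (by positivity)]
    field_simp
  have hK : 0 < 1 + 2 * m := by linarith
  have h₁ : η < c ^ 2 + 2 * c * d := by
    have hτK : τ < (τ + 2 * m) / (1 + 2 * m) := by rw [lt_div_iff₀ hK]; nlinarith
    have : c ^ 2 + 2 * c * d = (τ + 2 * m) / (1 + 2 * m) := by rw [hc, mul_assoc, hcd]; ring
    linarith
  have h₂ : η < 2 * c * d + d ^ 2 * 2 ^ n := by
    have hτK : τ < (2 * m + (1 - τ)) / (1 + 2 * m) := by rw [lt_div_iff₀ hK]; nlinarith
    have : 2 * c * d + d ^ 2 * 2 ^ n = (2 * m + (1 - τ)) / (1 + 2 * m) := by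
      rw [hd, mul_assoc, hcd]; ring
    linarith
  calc _ ≤ 2 * (c * d) ^ 2 * (2 ^ n + 1) := sum_alpha_single_add_const_sq_le hη0.le h₁ h₂
    _ = 2 * (m ^ 2 * (2 ^ n + 1)) / (1 + 2 * m) ^ 2 := by rw [hcd, div_pow]; ring
    _ ≤ 2 * τ * (1 - τ) := by
      rw [div_le_iff₀ (by positivity)]
      nlinarith [sq_mul_add_one_le (by positivity) hτ hm0.le hmA hmτ]

theorem cdf_small_despite_large_magic_general (n : ℕ)
    (τ : ℝ) (hτ0 : 0 < τ) (hτhalf : τ ≤ 1 / 2)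
    (m : ℝ) (hm : m = Real.sqrt (τ * (1 - τ) / 2 ^ n)) (hmτ : 2 * m < τ)
    (φ₀ : (Fin n → Fin 2) → ℂ)
    (hφ₀ : φ₀ = fun v =>
      (if v = fun _ => 0 then ((Real.sqrt τ : ℝ) : ℂ) else 0) +
        ((Real.sqrt (1 - τ) : ℝ) : ℂ) * (((Real.sqrt (2 ^ n) : ℝ) : ℂ))⁻¹)
    (K : ℝ) (hK : K = 1 + 2 * m)
    (φ : (Fin n → Fin 2) → ℂ) (hφ : φ = (((Real.sqrt K : ℝ) : ℂ))⁻¹ • φ₀)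
    (η : ℝ) (hη0 : 0 < η) (hητ : η ≤ τ) :
    ∑ x ∈ Finset.univ.filter
        (fun x : Fin n → Bool × Bool => (alpha φ x) ^ 2 ≤ η ^ 2),
        (alpha φ x) ^ 2 / 2 ^ n
      ≤ 2 * τ * (1 - τ) := by
  have hA : (0 : ℝ) < 2 ^ n := by positivity
  have h1τ : 0 < 1 - τ := by linarith
  have hK0 : 0 < K := by linarith [hm ▸ Real.sqrt_nonneg _]
  set c := (Real.sqrt K)⁻¹ * Real.sqrt τ with hc_def
  set d := (Real.sqrt K)⁻¹ * (Real.sqrt (1 - τ) * (Real.sqrt (2 ^ n))⁻¹) with hd_def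
  have hφcd : φ = Pi.single 0 (c : ℂ) + fun _ => (d : ℂ) := by
    funext v
    simp only [hφ, hφ₀, hc_def, hd_def, Pi.smul_apply, smul_eq_mul, mul_add, mul_ite, mul_zero,
      Complex.ofReal_mul, Complex.ofReal_inv, Pi.add_apply, Pi.single_apply]
    rfl
  have hc : c ^ 2 = τ / K := by
    rw [hc_def, mul_pow, inv_pow, Real.sq_sqrt hK0.le, Real.sq_sqrt hτ0.le, inv_mul_eq_div]
  have hd : d ^ 2 * 2 ^ n = (1 - τ) / K := by
    rw [hd_def, mul_pow, mul_pow, inv_pow, inv_pow, Real.sq_sqrt hK0.le, Real.sq_sqrt h1τ.le,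
      Real.sq_sqrt hA.le]
    field_simp
  have hcd : c * d = m / K := by
    rw [hc_def, hd_def, hm, Real.sqrt_div' _ hA.le, Real.sqrt_mul hτ0.le]
    field_simp
    rw [Real.sq_sqrt hK0.le]
  rw [hφcd]
  subst hK
  exact sum_alpha_single_add_const_sq_le_of_coeffs hτ0 hτhalf hm hmτ hc hd hcd hη0 hητ

/-- Appendix F example: the state `φ = K^{−1/2}(√τ|0…0⟩ + √(1−τ)|+…+⟩)` has a small
CDF: for `0 < η ≤ τ`, `Σ_{x : α(x)² ≤ η²} α(x)²/2^n ≤ 2τ(1−τ)`. -/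
theorem cdf_small_despite_large_magic (n : ℕ) (hn : 2 ≤ n)
    (τ : ℝ) (hτ0 : 0 < τ) (hτhalf : τ ≤ 1 / 2)
    (m : ℝ) (hm : m = Real.sqrt (τ * (1 - τ) / 2 ^ n)) (hmτ : 2 * m < τ)
    (φ₀ : (Fin n → Fin 2) → ℂ)
    (hφ₀ : φ₀ = fun v =>
      (if v = fun _ => 0 then ((Real.sqrt τ : ℝ) : ℂ) else 0) +
        ((Real.sqrt (1 - τ) : ℝ) : ℂ) * (((Real.sqrt (2 ^ n) : ℝ) : ℂ))⁻¹)
    (K : ℝ) (hK : K = 1 + 2 * m)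
    (φ : (Fin n → Fin 2) → ℂ) (hφ : φ = (((Real.sqrt K : ℝ) : ℂ))⁻¹ • φ₀)
    (η : ℝ) (hη0 : 0 < η) (hητ : η ≤ τ) :
    ∑ x ∈ Finset.univ.filter
        (fun x : Fin n → Bool × Bool => (alpha φ x) ^ 2 ≤ η ^ 2),
        (alpha φ x) ^ 2 / 2 ^ n
      ≤ 2 * τ * (1 - τ) :=
  cdf_small_despite_large_magic_general n τ hτ0 hτhalf m hm hmτ φ₀ hφ₀ K hK φ hφ η hη0 hητ
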